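/- Let F be a field and n ≥ 2. The map f : GC_n(F) → (ℤ/nℤ)^× sending an invertible Christoffel matrix to its type is a surjective group homomorphism whose kernel H consists of the invertible Christoffel matrices of type 1 (which are exactly the invertible matrices aI + b(J − I) with a ≠ b, J the all-ones matrix). Hence GC_n(F)/H ≅ (ℤ/nℤ)^×. -/

import Mathlib

/-- The `n × n` Christoffel matrix `C_m(a,b)`. -/
def christoffel (n m : ℕ) {R : Type*} (a b : R) : Matrix (Fin n) (Fin n) R :=
  Matrix.of fun i j =>
    if (((i : ℕ) : ZMod n) - (m : ZMod n) * ((j : ℕ) : ZMod n)).val < m then a else b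

/-- A matrix is a Christoffel matrix if it equals `C_m(a,b)` for some `m` coprime to `n`
and distinct `a, b`. -/
def IsChristoffel {R : Type*} (n : ℕ) (M : Matrix (Fin n) (Fin n) R) : Prop :=
  ∃ (m : ℕ) (a b : R), 1 ≤ m ∧ m < n ∧ Nat.Coprime m n ∧ a ≠ b ∧ M = christoffel n m a b

/-!
Write `J = christoffel n n 1 0` (all ones) and `P m = christoffel n m 1 0` (the 0/1 pattern of
type `m`), so that `C_m(a,b) = b • J + (a - b) • P m`. The entry `(i, j)` of `P m * P m'` counts
the `k` with `i - m k ∈ [0, m)` and `k - m' j ∈ [0, m')` modulo `n`. Writing `k = m' j + s`, the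
blocks `[m s, m s + m)`, `s < m'`, tile `[0, m m')`, so this is the number of `r < m m'` with
`r ≡ i - m m' j [MOD n]`, and `P m * P m' = ⌊m m' / n⌋ • J + P (m m' % n)`. Hence a product of
Christoffel matrices of types `m, m'` is Christoffel of type `m m' % n`, with
`a'' - b'' = (a - b) (a' - b')`. The type is read off the first column, so it is well defined
and multiplicative. An inverse of type `m⁻¹ mod n` is found by solving one linear equation
whose coefficient is the row sum `m (a - b) + n b`; that is nonzero for invertible matrices
because `J * C_m(a,b)` is this row sum times `J`.
-/

open Finset

section Counting

lemma ZMod.natCast_sub_mul_div {n m : ℕ} (r : ℕ) :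
    (r : ZMod n) - m * ((r / m : ℕ) : ZMod n) = ((r % m : ℕ) : ZMod n) := by
  rw [sub_eq_iff_eq_add', ← Nat.cast_mul, ← Nat.cast_add, Nat.div_add_mod]

variable {n : ℕ} [NeZero n]

lemma card_range_filter_natCast_eq (N : ℕ) (t : ZMod n) :
    #{r ∈ range N | ((r : ℕ) : ZMod n) = t} = N / n + if t.val < N % n then 1 else 0 := by
  rw [← Nat.mod_eq_of_lt (ZMod.val_lt t), ← Nat.count_modEq_card N (NeZero.pos n),
    Nat.count_eq_card_filter_range]
  congr! 2 with r
  rw [← ZMod.natCast_eq_natCast_iff, ZMod.natCast_zmod_val]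

lemma card_range_filter_val_sub_mul_lt {m : ℕ} (hm : m ≤ n) (m' : ℕ) (t : ZMod n) :
    #{s ∈ range m' | (t - m * (s : ℕ)).val < m} =
      #{r ∈ range (m * m') | ((r : ℕ) : ZMod n) = t} := by
  apply card_nbij' (fun s => m * s + (t - m * (s : ℕ)).val) (· / m)
  · intro s hs
    simp only [coe_filter, mem_range, Set.mem_ofPred_eq] at hs ⊢
    refine ⟨by nlinarith, ?_⟩
    push_cast [ZMod.natCast_zmod_val]
    ring
  · intro r hr
    simp only [coe_filter, mem_range, Set.mem_ofPred_eq] at hr ⊢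
    have hm0 : 0 < m := Nat.pos_of_ne_zero (by rintro rfl; simp at hr)
    refine ⟨Nat.div_lt_of_lt_mul hr.1, ?_⟩
    rw [← hr.2, ZMod.natCast_sub_mul_div, ZMod.val_cast_of_lt ((r.mod_lt hm0).trans_le hm)]
    exact r.mod_lt hm0
  · intro s hs
    simp only [coe_filter, mem_range, Set.mem_ofPred_eq] at hs
    have hm0 : 0 < m := Nat.zero_lt_of_lt hs.2
    dsimp only
    rw [Nat.mul_add_div hm0, Nat.div_eq_of_lt hs.2, add_zero]
  · intro r hr
    simp only [coe_filter, mem_range, Set.mem_ofPred_eq] at hr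
    have hm0 : 0 < m := Nat.pos_of_ne_zero (by rintro rfl; simp at hr)
    dsimp only
    rw [← hr.2, ZMod.natCast_sub_mul_div, ZMod.val_cast_of_lt ((r.mod_lt hm0).trans_le hm),
      Nat.div_add_mod]

lemma card_filter_and_val_sub_lt {m' : ℕ} (hm' : m' ≤ n) (y : ZMod n) (p : ZMod n → Prop)
    [DecidablePred p] :
    #{k : Fin n | p (k : ℕ) ∧ ((k : ℕ) - y : ZMod n).val < m'} =
      #{s ∈ range m' | p (y + (s : ℕ))} := by
  apply card_nbij' (fun k : Fin n => ((k : ℕ) - y : ZMod n).val)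
    (fun s : ℕ => (⟨(y + s).val, ZMod.val_lt _⟩ : Fin n))
  · intro k hk
    simp only [coe_filter, mem_range, Set.mem_ofPred_eq, mem_univ, true_and] at hk ⊢
    simpa [ZMod.natCast_zmod_val] using hk.symm
  · intro s hs
    simp only [coe_filter, mem_range, Set.mem_ofPred_eq, mem_univ, true_and] at hs ⊢
    simp [ZMod.val_cast_of_lt (hs.1.trans_le hm'), hs]
  · intro k _
    ext
    simp [ZMod.val_cast_of_lt k.isLt]
  · intro s hs
    simp only [coe_filter, mem_range, Set.mem_ofPred_eq] at hs
    simp [ZMod.val_cast_of_lt (hs.1.trans_le hm')]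

lemma card_filter_christoffel_mul {m m' : ℕ} (hm : m ≤ n) (hm' : m' ≤ n) (x y : ZMod n) :
    #{k : Fin n | (x - m * (k : ℕ)).val < m ∧ ((k : ℕ) - y : ZMod n).val < m'} =
      m * m' / n + if (x - m * y).val < m * m' % n then 1 else 0 := by
  rw [card_filter_and_val_sub_lt hm' y (fun z => (x - m * z).val < m)]
  simp_rw [mul_add, ← sub_sub]
  rw [card_range_filter_val_sub_mul_lt hm, card_range_filter_natCast_eq]

end Counting

section Matrices

variable {R : Type*} {n m m' : ℕ}

lemma christoffel_zero_zero [Zero R] (a : R) : christoffel n 0 a 0 = 0 := by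
  ext i j
  simp [christoffel]

lemma christoffel_eq_smul_add [Ring R] (a b : R) :
    christoffel n m a b = b • christoffel n n 1 0 + (a - b) • christoffel n m 1 0 := by
  ext i j
  have : NeZero n := NeZero.of_pos i.pos
  simp only [christoffel, Matrix.add_apply, Matrix.smul_apply, Matrix.of_apply, ZMod.val_lt,
    if_true, smul_eq_mul]
  split_ifs <;> simp

lemma christoffel_one_zero_mul [Semiring R] (hm : m ≤ n) (hm' : m' ≤ n) :
    christoffel n m (1 : R) 0 * christoffel n m' 1 0 =
      ((m * m' / n : ℕ) : R) • christoffel n n 1 0 + christoffel n (m * m' % n) 1 0 := by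
  ext i j
  have : NeZero n := NeZero.of_pos i.pos
  simp only [christoffel, Matrix.mul_apply, Matrix.add_apply, Matrix.smul_apply, Matrix.of_apply,
    ite_zero_mul_ite_zero, mul_one, sum_boole, ZMod.val_lt, if_true, smul_eq_mul]
  rw [card_filter_christoffel_mul hm hm']
  push_cast [ZMod.natCast_mod, mul_assoc]
  split_ifs <;> simp

lemma christoffel_mul_christoffel [CommRing R] (hm : m ≤ n) (hm' : m' ≤ n) (a b a' b' : R)
    {c : R} (hc : c = (a - b) * (a' - b') * (m * m' / n : ℕ) + b * (a' - b') * m' +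
      (m * (a - b) + n * b) * b') :
    christoffel n m a b * christoffel n m' a' b' =
      christoffel n (m * m' % n) (c + (a - b) * (a' - b')) c := by
  rcases Nat.eq_zero_or_pos n with rfl | hn
  · exact Subsingleton.elim _ _
  rw [christoffel_eq_smul_add (m := m) a b, christoffel_eq_smul_add (m := m') a' b',
    christoffel_eq_smul_add (m := m * m' % n), add_sub_cancel_left]
  simp only [add_mul, mul_add, Matrix.smul_mul, Matrix.mul_smul, christoffel_one_zero_mul hm hm',
    christoffel_one_zero_mul le_rfl hm', christoffel_one_zero_mul hm le_rfl,
    christoffel_one_zero_mul le_rfl le_rfl, Nat.mul_mod_right, Nat.mul_mod_left,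
    christoffel_zero_zero, Nat.mul_div_cancel_left _ hn, Nat.mul_div_cancel _ hn, add_zero, hc]
  module

lemma christoffel_apply_zero [NeZero n] (a b : R) (i : Fin n) :
    christoffel n m a b i 0 = if (i : ℕ) < m then a else b := by
  simp [christoffel, ZMod.val_cast_of_lt i.isLt]

lemma christoffel_ne_of_lt {a b a' b' : R} (hm : 0 < m) (hlt : m < m') (hm'n : m' ≤ n)
    (hab : a ≠ b) : christoffel n m a b ≠ christoffel n m' a' b' := by
  have : NeZero n := ⟨by omega⟩
  intro h
  have h0 := congr_fun₂ h 0 0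
  have hrow := congr_fun₂ h ⟨m, by omega⟩ 0
  simp only [christoffel_apply_zero, Fin.val_zero, hm, hlt, hm.trans hlt, lt_irrefl,
    if_true, if_false] at h0 hrow
  exact hab (h0.trans hrow.symm)

lemma eq_of_christoffel_eq {a b a' b' : R} (hm : 0 < m) (hm' : 0 < m') (hmn : m ≤ n)
    (hm'n : m' ≤ n) (hab : a ≠ b) (hab' : a' ≠ b')
    (h : christoffel n m a b = christoffel n m' a' b') : m = m' :=
  le_antisymm (not_lt.1 fun hlt => christoffel_ne_of_lt hm' hlt hmn hab' h.symm)
    (not_lt.1 fun hlt => christoffel_ne_of_lt hm hlt hm'n hab h)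

lemma christoffel_one (a b : R) :
    christoffel n 1 a b = Matrix.of fun i j => if i = j then a else b := by
  ext i j
  have : NeZero n := NeZero.of_pos i.pos
  simp [christoffel, sub_eq_zero, Fin.ext_iff, ZMod.natCast_eq_natCast_iff', Nat.mod_eq_of_lt]

lemma christoffel_one_one_zero [Zero R] [One R] : christoffel n 1 (1 : R) 0 = 1 := by
  rw [christoffel_one]
  rfl

lemma christoffel_sum_ne_zero_of_isUnit [CommRing R] [Nontrivial R] [NeZero n] (hm : m ≤ n)
    {a b : R} (h : IsUnit (christoffel n m a b)) : (m * (a - b) + n * b : R) ≠ 0 := by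
  intro hs
  have hJ := christoffel_mul_christoffel le_rfl hm 1 0 a b (c := 0) (by
    rw [Nat.mul_div_cancel_left _ (NeZero.pos n), ← hs]; ring)
  rw [Nat.mul_mod_right, christoffel_zero_zero, h.mul_left_eq_zero] at hJ
  simpa [christoffel_apply_zero, NeZero.pos n] using congr_fun₂ hJ 0 0


lemma christoffel_mul_christoffel_of_ne [CommRing R] [NoZeroDivisors R] (hm : m ≤ n)
    (hm' : m' ≤ n) {a b a' b' : R} (hab : a ≠ b) (hab' : a' ≠ b') :
    ∃ a'' b'', a'' ≠ b'' ∧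
      christoffel n m a b * christoffel n m' a' b' = christoffel n (m * m' % n) a'' b'' :=
  ⟨_, _, by simp [sub_eq_zero, hab, hab'], christoffel_mul_christoffel hm hm' a b a' b' rfl⟩

end Matrices

lemma Nat.Coprime.mod_pos {m n : ℕ} (h : m.Coprime n) (hn : 1 < n) : 0 < m % n := by
  refine Nat.pos_of_ne_zero fun h0 => ?_
  have := (ZMod.coprime_mod_iff_coprime m n).2 h
  rw [h0, Nat.coprime_zero_left] at this
  omega

lemma isChristoffel_christoffel_mod {R : Type*} {n m : ℕ} (hn : 1 < n) (hcop : m.Coprime n)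
    {a b : R} (hab : a ≠ b) : IsChristoffel n (christoffel n (m % n) a b) :=
  ⟨_, a, b, hcop.mod_pos hn, Nat.mod_lt _ (by omega), (ZMod.coprime_mod_iff_coprime _ _).2 hcop,
    hab, rfl⟩

section Field

variable {F : Type*} [Field F] {n m : ℕ}

lemma exists_isChristoffel_mul_eq_one (hn : 1 < n) (hmn : m ≤ n) (hcop : m.Coprime n)
    {a b : F} (hab : a ≠ b) (hs : (m * (a - b) + n * b : F) ≠ 0) :
    ∃ N, IsChristoffel n N ∧ christoffel n m a b * N = 1 := by
  obtain ⟨m₂, hm₂n, hmm₂⟩ := Nat.exists_mul_mod_eq_one_of_coprime hcop hn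
  have hm₂ : m₂.Coprime n := Nat.Coprime.coprime_mul_left
    ((ZMod.coprime_mod_iff_coprime _ _).1 (hmm₂ ▸ Nat.coprime_one_left n))
  have hm₂pos : 0 < m₂ := Nat.pos_of_ne_zero (by rintro rfl; simp at hmm₂)
  have hd : a - b ≠ 0 := sub_ne_zero.2 hab
  -- `b₂` makes the constant `c` of `christoffel_mul_christoffel` vanish
  set b₂ : F := -((m * m₂ / n : ℕ) + b * (a - b)⁻¹ * m₂) / (m * (a - b) + n * b)
    with hb₂
  refine ⟨christoffel n m₂ (b₂ + (a - b)⁻¹) b₂,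
    ⟨m₂, _, _, hm₂pos, hm₂n, hm₂, by simpa using hd, rfl⟩, ?_⟩
  rw [christoffel_mul_christoffel hmn hm₂n.le a b _ _ (c := 0), hmm₂, zero_add,
    add_sub_cancel_left, mul_inv_cancel₀ hd, christoffel_one_one_zero]
  rw [add_sub_cancel_left, mul_inv_cancel₀ hd, hb₂, mul_div_cancel₀ _ hs]
  ring

lemma exists_ne_and_sum_ne_zero (hcop : m.Coprime n) :
    ∃ a b : F, a ≠ b ∧ (m * (a - b) + n * b : F) ≠ 0 := by
  by_cases hm : (m : F) = 0
  · have := hcop.isCoprime.map (Int.castRingHom F)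
    simp only [map_natCast, hm, isCoprime_zero_left] at this
    exact ⟨0, 1, zero_ne_one, by simpa [hm] using this.ne_zero⟩
  · exact ⟨1, 0, one_ne_zero, by simpa using hm⟩

end Field

namespace IsChristoffel

variable {R : Type*} {n m : ℕ} {M N : Matrix (Fin n) (Fin n) R}

noncomputable def type (h : IsChristoffel n M) : ℕ := h.choose

lemma type_spec (h : IsChristoffel n M) :
    1 ≤ h.type ∧ h.type < n ∧ h.type.Coprime n ∧
      ∃ a b : R, a ≠ b ∧ M = christoffel n h.type a b := by
  obtain ⟨a, b, h1, h2, h3, h4, h5⟩ := h.choose_spec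
  exact ⟨h1, h2, h3, a, b, h4, h5⟩

lemma coprime_type (h : IsChristoffel n M) : h.type.Coprime n := h.type_spec.2.2.1

lemma one_lt (h : IsChristoffel n M) : 1 < n := h.type_spec.1.trans_lt h.type_spec.2.1

lemma type_eq (h : IsChristoffel n M) {a b : R} (hm : 0 < m) (hmn : m ≤ n) (hab : a ≠ b)
    (hM : M = christoffel n m a b) : h.type = m := by
  obtain ⟨h1, h2, -, a₀, b₀, hab₀, hM₀⟩ := h.type_spec
  exact eq_of_christoffel_eq h1 hm h2.le hmn hab₀ hab (hM₀.symm.trans hM)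

variable [CommRing R] [NoZeroDivisors R]

lemma exists_mul_eq (hM : IsChristoffel n M) (hN : IsChristoffel n N) :
    ∃ a b : R, a ≠ b ∧ M * N = christoffel n (hM.type * hN.type % n) a b := by
  obtain ⟨-, hmn, -, a, b, hab, hM'⟩ := hM.type_spec
  obtain ⟨-, hm'n, -, a', b', hab', hN'⟩ := hN.type_spec
  obtain ⟨a'', b'', hab'', h⟩ := christoffel_mul_christoffel_of_ne hmn.le hm'n.le hab hab'
  exact ⟨a'', b'', hab'', (congrArg₂ (· * ·) hM' hN').trans h⟩

lemma mul (hM : IsChristoffel n M) (hN : IsChristoffel n N) : IsChristoffel n (M * N) := by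
  obtain ⟨a, b, hab, hMN⟩ := hM.exists_mul_eq hN
  exact hMN ▸
    isChristoffel_christoffel_mod hM.one_lt (hM.coprime_type.mul_left hN.coprime_type) hab

lemma type_mul (hM : IsChristoffel n M) (hN : IsChristoffel n N) :
    (hM.mul hN).type = hM.type * hN.type % n := by
  obtain ⟨a, b, hab, hMN⟩ := hM.exists_mul_eq hN
  exact (hM.mul hN).type_eq ((hM.coprime_type.mul_left hN.coprime_type).mod_pos hM.one_lt)
    (Nat.mod_lt _ (by have := hM.one_lt; omega)).le hab hMN

end IsChristoffel

section GeneralLinearGroup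

variable {F : Type*} [Field F] {n : ℕ} [Fact (1 < n)]

variable (F n) in
def christoffelSubgroup : Subgroup (GL (Fin n) F) where
  carrier := {A | IsChristoffel n (A : Matrix (Fin n) (Fin n) F)}
  mul_mem' hA hB := hA.mul hB
  one_mem' := ⟨1, 1, 0, le_rfl, Fact.out, Nat.coprime_one_left n, one_ne_zero,
    christoffel_one_one_zero.symm⟩
  inv_mem' {A} hA := by
    have hA : IsChristoffel n (A : Matrix (Fin n) (Fin n) F) := hA
    have : NeZero n := ⟨by have := hA.one_lt; omega⟩
    obtain ⟨-, hmn, hcop, a, b, hab, hA'⟩ := hA.type_spec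
    obtain ⟨N, hN, hAN⟩ := exists_isChristoffel_mul_eq_one hA.one_lt hmn.le hcop hab
      (christoffel_sum_ne_zero_of_isUnit hmn.le (hA' ▸ A.isUnit))
    rw [← hA'] at hAN
    show IsChristoffel n _
    rwa [Units.inv_eq_of_mul_eq_one_right hAN]

lemma mem_christoffelSubgroup {A : GL (Fin n) F} :
    A ∈ christoffelSubgroup F n ↔ IsChristoffel n (A : Matrix (Fin n) (Fin n) F) :=
  Iff.rfl

variable (F n) in
noncomputable def christoffelType : christoffelSubgroup F n →* (ZMod n)ˣ where
  toFun A := ZMod.unitOfCoprime _ (mem_christoffelSubgroup.1 A.2).coprime_type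
  map_one' := Units.ext <| by
    rw [ZMod.coe_unitOfCoprime, Units.val_one,
      (mem_christoffelSubgroup.1 (1 : christoffelSubgroup F n).2).type_eq one_pos
        (Fact.out : 1 < n).le one_ne_zero christoffel_one_one_zero.symm, Nat.cast_one]
  map_mul' A B := Units.ext <| by
    rw [Units.val_mul, ZMod.coe_unitOfCoprime, ZMod.coe_unitOfCoprime, ZMod.coe_unitOfCoprime,
      ← Nat.cast_mul]
    exact (congrArg _ ((mem_christoffelSubgroup.1 A.2).type_mul
      (mem_christoffelSubgroup.1 B.2))).trans (ZMod.natCast_mod _ n)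

lemma coe_christoffelType (A : christoffelSubgroup F n) {m : ℕ} {a b : F} (hm : 0 < m)
    (hmn : m ≤ n) (hab : a ≠ b)
    (hA : ((A : GL (Fin n) F) : Matrix (Fin n) (Fin n) F) = christoffel n m a b) :
    (christoffelType F n A : ZMod n) = m := by
  show ((_ : ℕ) : ZMod n) = m
  rw [(mem_christoffelSubgroup.1 A.2).type_eq hm hmn hab hA]

variable (F n) in
lemma christoffelType_surjective : Function.Surjective (christoffelType F n) := by
  intro w
  set m := (w : ZMod n).val
  have hm : 0 < m := ZMod.val_pos.2 w.ne_zero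
  have hmn : m < n := ZMod.val_lt _
  have hcop : m.Coprime n := ZMod.val_coe_unit_coprime w
  obtain ⟨a, b, hab, hs⟩ := exists_ne_and_sum_ne_zero (F := F) hcop
  obtain ⟨N, -, hN⟩ := exists_isChristoffel_mul_eq_one Fact.out hmn.le hcop hab hs
  let A : GL (Fin n) F := ⟨christoffel n m a b, N, hN, mul_eq_one_comm.1 hN⟩
  refine ⟨⟨A, m, a, b, hm, hmn, hcop, hab, rfl⟩, Units.ext ?_⟩
  rw [coe_christoffelType _ hm hmn.le hab rfl, ZMod.natCast_zmod_val]

lemma christoffelType_eq_one_iff (A : christoffelSubgroup F n) :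
    christoffelType F n A = 1 ↔
      ∃ a b : F, a ≠ b ∧
        ((A : GL (Fin n) F) : Matrix (Fin n) (Fin n) F) = christoffel n 1 a b := by
  constructor
  · intro h
    obtain ⟨hm, hmn, -, a, b, hab, hA⟩ := (mem_christoffelSubgroup.1 A.2).type_spec
    have h1 := congrArg ZMod.val ((coe_christoffelType A hm hmn.le hab hA).symm.trans
      (congrArg Units.val h))
    rw [ZMod.val_natCast, Nat.mod_eq_of_lt hmn, Units.val_one, ZMod.val_one] at h1
    exact ⟨a, b, hab, h1 ▸ hA⟩
  · rintro ⟨a, b, hab, hA⟩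
    exact Units.ext (by
      rw [coe_christoffelType A one_pos (Fact.out : 1 < n).le hab hA, Nat.cast_one, Units.val_one])

end GeneralLinearGroup

theorem christoffel_type_hom (F : Type*) [Field F] (n : ℕ) (hn : 2 ≤ n) :
    ∃ G : Subgroup (GL (Fin n) F),
      (∀ A : GL (Fin n) F, A ∈ G ↔ IsChristoffel n (↑A : Matrix (Fin n) (Fin n) F)) ∧
      ∃ f : G →* (ZMod n)ˣ,
        Function.Surjective f ∧
        (∀ (A : G) (m : ℕ) (a b : F), 1 ≤ m → m < n → Nat.Coprime m n → a ≠ b →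
          (((A : GL (Fin n) F) : Matrix (Fin n) (Fin n) F)) = christoffel n m a b →
          ((f A : (ZMod n)ˣ) : ZMod n) = (m : ZMod n)) ∧
        (∀ A : G, f A = 1 ↔ ∃ a b : F, a ≠ b ∧
          IsUnit ((((A : GL (Fin n) F) : Matrix (Fin n) (Fin n) F))) ∧
          (((A : GL (Fin n) F) : Matrix (Fin n) (Fin n) F)) = Matrix.of fun i j => if i = j then a else b) ∧
        Nonempty ((G ⧸ f.ker) ≃* (ZMod n)ˣ) := by
  have : Fact (1 < n) := ⟨hn⟩
  refine ⟨christoffelSubgroup F n, fun A => mem_christoffelSubgroup, christoffelType F n,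
    christoffelType_surjective F n,
    fun A m a b hm hmn _ hab hA => coe_christoffelType A hm hmn.le hab hA, fun A => ?_,
    ⟨QuotientGroup.quotientKerEquivOfSurjective _ (christoffelType_surjective F n)⟩⟩
  simp only [christoffelType_eq_one_iff, christoffel_one, Units.isUnit, true_and]
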